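/- If G is a finite nonempty claw-free graph, then α(G) ≤ 2·i(G), i.e., the independence number is at most twice the independent domination number. -/

import Mathlib

/-!
Send every vertex of an independent set `S` to a vertex of a dominating set `D` that equals or
dominates it. A fibre over `d ∈ D` is an independent set inside the closed neighbourhood of `d`:
if it contains `d` it is `{d}`, and otherwise it lies in the open neighbourhood, where claw-freeness
allows at most two pairwise non-adjacent vertices. Hence `|S| ≤ 2 |D|`. Applied to a maximum
independent set `S` and a minimum independent dominating set `D` (which exists because a maximal
independent set is dominating), this gives `α(G) ≤ 2 i(G)`.
-/

open Finset

namespace SimpleGraph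

variable {V : Type*} {G : SimpleGraph V}

def IsClawFree (G : SimpleGraph V) : Prop :=
  ∀ a b c d : V, G.Adj a b → G.Adj a c → G.Adj a d →
    ¬ G.Adj b c → ¬ G.Adj b d → ¬ G.Adj c d → b = c ∨ b = d ∨ c = d

theorem maximal_isIndepSet_forall_exists_adj {s : Set V} (hs : Maximal G.IsIndepSet s)
    (v : V) (hv : v ∉ s) : ∃ u ∈ s, G.Adj u v := by
  by_contra! hnone
  have hins : G.IsIndepSet (insert v s) :=
    hs.1.insert fun u hu _ => ⟨fun h => hnone u hu h.symm, hnone u hu⟩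
  exact hv (hs.2 hins (Set.subset_insert v s) (Set.mem_insert v s))

theorem IsClawFree.card_filter_eq_or_adj_le_two [DecidableEq V] [DecidableRel G.Adj]
    (hG : G.IsClawFree) {S : Finset V} (hS : G.IsIndepSet S) (d : V) :
    #{a ∈ S | a = d ∨ G.Adj d a} ≤ 2 := by
  set T := {a ∈ S | a = d ∨ G.Adj d a}
  have hTS : ∀ x ∈ T, x ∈ S := fun x hx => (mem_filter.1 hx).1
  have hadj : ∀ x ∈ T, ∀ y ∈ T, x ≠ y → G.Adj d x := by
    intro x hx y hy hxy
    rcases (mem_filter.1 hx).2 with rfl | hdx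
    · rcases (mem_filter.1 hy).2 with rfl | hxy'
      · exact absurd rfl hxy
      · exact absurd hxy' (hS (hTS x hx) (hTS y hy) hxy)
    · exact hdx
  by_contra! hT
  obtain ⟨a, ha, b, hb, c, hc, hab, hac, hbc⟩ := two_lt_card.1 hT
  rcases hG d a b c (hadj a ha b hb hab) (hadj b hb a ha hab.symm) (hadj c hc a ha hac.symm)
      (hS (hTS a ha) (hTS b hb) hab) (hS (hTS a ha) (hTS c hc) hac)
      (hS (hTS b hb) (hTS c hc) hbc) with h | h | h <;> contradiction

theorem IsClawFree.card_le_two_mul_card_of_dominates (hG : G.IsClawFree)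
    {S D : Finset V} (hS : G.IsIndepSet S) (hD : ∀ v : V, v ∉ D → ∃ u ∈ D, G.Adj u v) :
    #S ≤ 2 * #D := by
  classical
  have hcover : S ⊆ D.biUnion fun d => {a ∈ S | a = d ∨ G.Adj d a} := by
    intro a ha
    by_cases haD : a ∈ D
    · exact mem_biUnion.2 ⟨a, haD, mem_filter.2 ⟨ha, Or.inl rfl⟩⟩
    · obtain ⟨u, huD, hua⟩ := hD a haD
      exact mem_biUnion.2 ⟨u, huD, mem_filter.2 ⟨ha, Or.inr hua⟩⟩
  calc #S ≤ #(D.biUnion fun d => {a ∈ S | a = d ∨ G.Adj d a}) := card_le_card hcover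
    _ ≤ #D * 2 := card_biUnion_le_card_mul _ _ _ fun d _ => hG.card_filter_eq_or_adj_le_two hS d
    _ = 2 * #D := mul_comm _ _

end SimpleGraph

theorem clawfree_indepNum_le_two_mul_indDomNum_general {V : Type*} [Fintype V]
    (G : SimpleGraph V)
    (hclaw : ∀ a b c d : V, G.Adj a b → G.Adj a c → G.Adj a d →
      ¬ G.Adj b c → ¬ G.Adj b d → ¬ G.Adj c d → b = c ∨ b = d ∨ c = d) :
    sSup {n : ℕ | ∃ S : Finset V,
        (↑S : Set V).Pairwise (fun a b => ¬ G.Adj a b) ∧ S.card = n} ≤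
    2 * sInf {n : ℕ | ∃ S : Finset V,
        (∀ v : V, v ∉ S → ∃ u ∈ S, G.Adj u v) ∧
        (↑S : Set V).Pairwise (fun a b => ¬ G.Adj a b) ∧ S.card = n} := by
  obtain ⟨I, hI⟩ := G.maximumIndepSet_exists
  have hIdom := SimpleGraph.maximal_isIndepSet_forall_exists_adj (hI.isMaximalIndepSet I)
  refine csSup_le ⟨0, ∅, by simp⟩ ?_
  rintro n ⟨S, hS, rfl⟩
  generalize hX : {n : ℕ | _} = X
  have hmem : sInf X ∈ X := Nat.sInf_mem (hX ▸ ⟨#I, I, hIdom, hI.isIndepSet, rfl⟩)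
  subst hX
  obtain ⟨D, hD, -, hDcard⟩ := hmem
  exact hDcard ▸ SimpleGraph.IsClawFree.card_le_two_mul_card_of_dominates hclaw hS hD

/-- In a finite nonempty claw-free graph, the independence number is at most twice the
independent domination number: `α(G) ≤ 2 · i(G)`. -/
theorem clawfree_indepNum_le_two_mul_indDomNum {V : Type*} [Fintype V] [Nonempty V]
    (G : SimpleGraph V)
    (hclaw : ∀ a b c d : V, G.Adj a b → G.Adj a c → G.Adj a d →
      ¬ G.Adj b c → ¬ G.Adj b d → ¬ G.Adj c d → b = c ∨ b = d ∨ c = d) :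
    sSup {n : ℕ | ∃ S : Finset V,
        (↑S : Set V).Pairwise (fun a b => ¬ G.Adj a b) ∧ S.card = n} ≤
    2 * sInf {n : ℕ | ∃ S : Finset V,
        (∀ v : V, v ∉ S → ∃ u ∈ S, G.Adj u v) ∧
        (↑S : Set V).Pairwise (fun a b => ¬ G.Adj a b) ∧ S.card = n} :=
  clawfree_indepNum_le_two_mul_indDomNum_general G hclaw
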